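/- Define for real z ∈ (0, 1/27) the functions ϖ̃₁(z) = ∑_{j≥1} 3·(3j−1)!/(j!)³·(−z)^j, ϖ̃₂(z) = ∑_{j≥1} 18·(3j−1)!/(j!)³·(H_{3j−1} − H_j)·(−z)^j, and u(z) = z·exp(ϖ̃₁(z)). Then, as z → 0⁺, ϖ̃₂(z) − ϖ̃₁(z)² = −18·u(z) + (135/2)·u(z)² − 488·u(z)³ + O(z⁴). -/

import Mathlib

open Real Filter Asymptotics

/-- The `k`-th harmonic number `H_k = ∑_{i=1}^k 1/i`. -/
noncomputable def harmonicNum (k : ℕ) : ℝ := ∑ i ∈ Finset.range k, (1 : ℝ) / (i + 1)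

/-- The coefficients `c_j = 3 (3j-1)! / (j!)^3` of the logarithmic period of local P². -/
noncomputable def localP2c (j : ℕ) : ℝ :=
  3 * (Nat.factorial (3 * j - 1) : ℝ) / ((Nat.factorial j : ℝ)) ^ 3

/-- The coefficients `d_j = 18 (3j-1)! / (j!)^3 (H_{3j-1} - H_j)`. -/
noncomputable def localP2d (j : ℕ) : ℝ :=
  18 * (Nat.factorial (3 * j - 1) : ℝ) / ((Nat.factorial j : ℝ)) ^ 3 *
    (harmonicNum (3 * j - 1) - harmonicNum j)

/-- The power-series part `ϖ̃₁(z) = ∑_{j ≥ 1} c_j (-z)^j` of the logarithmic period. -/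
noncomputable def w1tilde (z : ℝ) : ℝ := ∑' j : ℕ, localP2c (j + 1) * (-z) ^ (j + 1)

/-- The power-series part `ϖ̃₂(z) = ∑_{j ≥ 1} d_j (-z)^j` of the double-logarithmic
period. -/
noncomputable def w2tilde (z : ℝ) : ℝ := ∑' j : ℕ, localP2d (j + 1) * (-z) ^ (j + 1)

/-- The inverse mirror map `u(z) = e^{-t} = z exp(ϖ̃₁(z))` of local P². -/
noncomputable def mirrorU (z : ℝ) : ℝ := z * Real.exp (w1tilde z)

/-! Both periods are power series whose coefficients grow at most like `27 ^ j`, because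
`(3j)! ≤ 27 ^ j (j!) ^ 3` and `H_{3j-1} - H_j ≤ 2`; hence each agrees with its cubic Taylor
polynomial up to `O(z⁴)`. Expanding `exp` to second order gives `u = z - 6z² + 63z³ + O(z⁴)`, and
substituting these expansions into `ϖ̃₂ - ϖ̃₁² + 18u - (135/2)u² + 488u³` cancels every term of
order at most three. -/

open scoped Nat Topology

theorem tsum_sub_sum_range_isBigO_pow {a : ℕ → ℝ} {C R : ℝ} (hR : 0 < R)
    (ha : ∀ j, |a j| * R ^ j ≤ C) (n : ℕ) :
    (fun x : ℝ => ∑' j, a j * x ^ j - ∑ j ∈ Finset.range n, a j * x ^ j)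
      =O[𝓝 0] fun x => x ^ n := by
  lift R to NNReal using hR.le
  set p := FormalMultilinearSeries.ofScalars ℝ a
  have hradius : 0 < p.radius :=
    lt_of_lt_of_le (mod_cast hR) <| p.le_radius_of_bound C fun j => by
      simpa [p, FormalMultilinearSeries.ofScalars_norm] using ha j
  have h := (p.hasFPowerSeriesOnBall hradius).hasFPowerSeriesAt.isBigO_sub_partialSum_pow n
  simp only [p, FormalMultilinearSeries.sum, FormalMultilinearSeries.partialSum,
    FormalMultilinearSeries.ofScalars_apply_eq, smul_eq_mul, zero_add, ← norm_pow,
    isBigO_norm_right] at h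
  simpa only [mul_comm] using h

theorem Real.exp_sub_taylor_two_isBigO :
    (fun x : ℝ => exp x - (1 + x + x ^ 2 / 2)) =O[𝓝 0] fun x => x ^ 3 := by
  have h :=
    (NormedSpace.exp_hasFPowerSeriesAt_zero (𝕂 := ℝ) (𝔸 := ℝ)).isBigO_sub_partialSum_pow 3
  simp only [FormalMultilinearSeries.partialSum, NormedSpace.expSeries_apply_eq, zero_add,
    ← Real.exp_eq_exp_ℝ, ← norm_pow, isBigO_norm_right, Finset.sum_range_succ] at h
  refine h.congr_left fun x => ?_
  simp only [Finset.range_zero, Finset.sum_empty, smul_eq_mul, Nat.factorial,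
    Nat.cast_one, Nat.succ_eq_add_one, Nat.reduceAdd, inv_one, pow_zero, pow_one]
  ring

theorem isBigO_pow_sub_pow {α : Type*} {l : Filter α} {f g k : α → ℝ}
    (h : (fun x => f x - g x) =O[l] k) (hg : g =O[l] fun _ => (1 : ℝ))
    (hk : k =O[l] fun _ => (1 : ℝ)) (m : ℕ) :
    (fun x => f x ^ m - g x ^ m) =O[l] k := by
  have hf : f =O[l] fun _ => (1 : ℝ) :=
    ((h.trans hk).add hg).congr (fun x => by ring) fun _ => by norm_num
  have hsum : (fun x => ∑ i ∈ Finset.range m, f x ^ i * g x ^ (m - 1 - i))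
      =O[l] fun _ => (1 : ℝ) :=
    IsBigO.fun_sum fun i _ => ((hf.pow i).mul (hg.pow _)).congr_right fun _ => by simp
  exact (hsum.mul h).congr (fun x => geom_sum₂_mul _ _ _) fun x => one_mul _

theorem isBigO_pow_mul_of_continuousAt {q : ℝ → ℝ} (hq : ContinuousAt q 0) (n : ℕ) :
    (fun z : ℝ => z ^ n * q z) =O[𝓝 0] fun z => z ^ n :=
  ((isBigO_refl _ _).mul (hq.tendsto.isBigO_one ℝ)).congr_right fun _ => mul_one _

theorem Nat.factorial_three_mul_le (j : ℕ) : (3 * j)! ≤ 27 ^ j * j ! ^ 3 := by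
  induction j with
  | zero => simp
  | succ n ih =>
    rw [show 3 * (n + 1) = 3 * n + 1 + 1 + 1 by ring, Nat.factorial_succ, Nat.factorial_succ,
      Nat.factorial_succ, Nat.factorial_succ, pow_succ, mul_pow]
    calc (3 * n + 1 + 1 + 1) * ((3 * n + 1 + 1) * ((3 * n + 1) * (3 * n)!))
        ≤ (3 * (n + 1)) * ((3 * (n + 1)) * ((3 * (n + 1)) * (27 ^ n * n ! ^ 3))) := by
          gcongr <;> omega
      _ = 27 ^ n * 27 * ((n + 1) ^ 3 * n ! ^ 3) := by ring

theorem harmonicNum_sub_harmonicNum_le (j : ℕ) :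
    harmonicNum (3 * (j + 1) - 1) - harmonicNum (j + 1) ≤ 2 := by
  rw [harmonicNum, harmonicNum, ← Finset.sum_Ico_eq_sub _ (by omega)]
  calc ∑ i ∈ Finset.Ico (j + 1) (3 * (j + 1) - 1), (1 : ℝ) / (i + 1)
      ≤ ∑ _i ∈ Finset.Ico (j + 1) (3 * (j + 1) - 1), (1 : ℝ) / (j + 1) := by
        refine Finset.sum_le_sum fun i hi => one_div_le_one_div_of_le (by positivity) ?_
        have : j + 1 ≤ i := (Finset.mem_Ico.1 hi).1
        exact_mod_cast this.trans (Nat.le_succ i)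
    _ = (2 * j + 1 : ℕ) / (j + 1) := by
        rw [Finset.sum_const, Nat.card_Ico, nsmul_eq_mul, mul_one_div]
        congr 2; omega
    _ ≤ 2 := by
        rw [div_le_iff₀ (by positivity)]; push_cast; linarith

theorem localP2c_succ_le (j : ℕ) : |localP2c (j + 1)| ≤ 3 * 27 ^ (j + 1) := by
  have hfact : ((3 * (j + 1) - 1)! : ℝ) ≤ 27 ^ (j + 1) * (j + 1)! ^ 3 := by
    exact_mod_cast (Nat.factorial_le (Nat.sub_le _ 1)).trans (Nat.factorial_three_mul_le _)
  rw [abs_of_nonneg (by unfold localP2c; positivity), localP2c, div_le_iff₀ (by positivity)]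
  linarith

theorem localP2d_succ_le (j : ℕ) : |localP2d (j + 1)| ≤ 36 * 27 ^ (j + 1) := by
  have hH : 0 ≤ harmonicNum (3 * (j + 1) - 1) - harmonicNum (j + 1) := by
    rw [harmonicNum, harmonicNum, ← Finset.sum_Ico_eq_sub _ (by omega)]
    positivity
  have hd : localP2d (j + 1) = 6 * localP2c (j + 1) *
      (harmonicNum (3 * (j + 1) - 1) - harmonicNum (j + 1)) := by
    rw [localP2d, localP2c]; ring
  rw [hd, abs_mul, abs_mul, abs_of_nonneg hH]
  calc |(6 : ℝ)| * |localP2c (j + 1)| * (harmonicNum (3 * (j + 1) - 1) - harmonicNum (j + 1))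
      ≤ 6 * (3 * 27 ^ (j + 1)) * 2 := by
        gcongr
        · norm_num
        · exact localP2c_succ_le j
        · exact harmonicNum_sub_harmonicNum_le j
    _ = 36 * 27 ^ (j + 1) := by ring

theorem tsum_neg_pow_succ_sub_cubic_isBigO {a : ℕ → ℝ} {K : ℝ}
    (ha : ∀ j, |a (j + 1)| ≤ K * 27 ^ (j + 1)) :
    (fun z : ℝ => ∑' j, a (j + 1) * (-z) ^ (j + 1) - (-(a 1 * z) + a 2 * z ^ 2 - a 3 * z ^ 3))
      =O[𝓝 0] fun z => z ^ 4 := by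
  have hg := tsum_sub_sum_range_isBigO_pow (a := fun j => a (j + 1)) (C := 27 * K)
    (R := 1 / 27) (by norm_num) (fun j => by
      calc |a (j + 1)| * (1 / 27) ^ j ≤ K * 27 ^ (j + 1) * (1 / 27) ^ j := by gcongr; exact ha j
        _ = 27 * K := by rw [pow_succ, one_div_pow]; field_simp) 3
  have hneg : Tendsto (fun z : ℝ => -z) (𝓝 0) (𝓝 0) := by
    simpa using (continuous_neg (G := ℝ)).tendsto 0
  refine ((isBigO_refl (fun z : ℝ => -z) _).mul (hg.comp_tendsto hneg)).congr (fun z => ?_)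
    fun z => by simp only [Function.comp_apply]; ring
  simp only [Function.comp_apply, Finset.sum_range_succ, Finset.sum_range_zero, mul_sub,
    ← tsum_mul_left, pow_succ]
  ring_nf

theorem w1tilde_sub_cubic_isBigO :
    (fun z => w1tilde z - (-6 * z + 45 * z ^ 2 - 560 * z ^ 3)) =O[𝓝 0] fun z => z ^ 4 := by
  have c₁ : localP2c 1 = 6 := by norm_num [localP2c]
  have c₂ : localP2c 2 = 45 := by norm_num [localP2c, Nat.factorial]
  have c₃ : localP2c 3 = 560 := by norm_num [localP2c, Nat.factorial]
  refine (tsum_neg_pow_succ_sub_cubic_isBigO localP2c_succ_le).congr_left fun z => ?_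
  rw [w1tilde, c₁, c₂, c₃]; ring

theorem w2tilde_sub_cubic_isBigO :
    (fun z => w2tilde z - (-18 * z + 423 / 2 * z ^ 2 - 2972 * z ^ 3))
      =O[𝓝 0] fun z => z ^ 4 := by
  have d₁ : localP2d 1 = 18 := by norm_num [localP2d, harmonicNum]
  have d₂ : localP2d 2 = 423 / 2 := by
    norm_num [localP2d, harmonicNum, Nat.factorial, Finset.sum_range_succ]
  have d₃ : localP2d 3 = 2972 := by
    norm_num [localP2d, harmonicNum, Nat.factorial, Finset.sum_range_succ]
  refine (tsum_neg_pow_succ_sub_cubic_isBigO localP2d_succ_le).congr_left fun z => ?_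
  rw [w2tilde, d₁, d₂, d₃]; ring

theorem exp_w1tilde_sub_quadratic_isBigO :
    (fun z => exp (w1tilde z) - (1 - 6 * z + 63 * z ^ 2)) =O[𝓝 0] fun z => z ^ 3 := by
  have hw := w1tilde_sub_cubic_isBigO
  have hz43 : (fun z : ℝ => z ^ 4) =O[𝓝 0] fun z => z ^ 3 :=
    (isLittleO_pow_pow (by norm_num)).isBigO
  have hP : (fun z : ℝ => -6 * z + 45 * z ^ 2 - 560 * z ^ 3) =O[𝓝 0] fun z => z :=
    (isBigO_pow_mul_of_continuousAt (q := fun z => -6 + 45 * z - 560 * z ^ 2) (by fun_prop)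
      1).congr (fun z => by ring) pow_one
  have hz41 : (fun z : ℝ => z ^ 4) =O[𝓝 0] fun z => z :=
    (isLittleO_pow_pow (by norm_num : 1 < 4)).isBigO.congr_right pow_one
  have hw_lin : w1tilde =O[𝓝 0] fun z => z :=
    ((hw.trans hz41).add hP).congr_left fun z => by ring
  have htaylor : (fun z => exp (w1tilde z) - (1 + w1tilde z + w1tilde z ^ 2 / 2))
      =O[𝓝 0] fun z => z ^ 3 :=
    (Real.exp_sub_taylor_two_isBigO.comp_tendsto (hw_lin.trans_tendsto tendsto_id)).trans
      (hw_lin.pow 3)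
  have hsq := isBigO_pow_sub_pow hw ((Continuous.tendsto (by fun_prop) 0).isBigO_one ℝ)
    ((Continuous.tendsto (by fun_prop) 0).isBigO_one ℝ) 2
  have hres := isBigO_pow_mul_of_continuousAt
    (q := fun z => -830 + 8745 / 2 * z - 25200 * z ^ 2 + 156800 * z ^ 3) (by fun_prop) 3
  refine (((htaylor.add (hw.trans hz43)).add ((hsq.trans hz43).const_mul_left (1 / 2))).add
    hres).congr_left fun z => ?_
  ring

theorem mirrorU_sub_cubic_isBigO :
    (fun z => mirrorU z - (z - 6 * z ^ 2 + 63 * z ^ 3)) =O[𝓝 0] fun z => z ^ 4 :=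
  ((isBigO_refl (fun z : ℝ => z) _).mul exp_w1tilde_sub_quadratic_isBigO).congr
    (fun z => by rw [mirrorU]; ring) fun z => by ring

theorem genus_zero_GW_localP2 :
    (fun z : ℝ => w2tilde z - (w1tilde z) ^ 2 -
        (-18 * mirrorU z + 135 / 2 * (mirrorU z) ^ 2 - 488 * (mirrorU z) ^ 3))
      =O[nhdsWithin (0 : ℝ) (Set.Ioi 0)] (fun z : ℝ => z ^ 4) := by
  have hz4 : (fun z : ℝ => z ^ 4) =O[𝓝 0] fun _ => (1 : ℝ) :=
    (Continuous.tendsto (by fun_prop) 0).isBigO_one ℝ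
  have hw1sq := isBigO_pow_sub_pow w1tilde_sub_cubic_isBigO
    ((Continuous.tendsto (by fun_prop) 0).isBigO_one ℝ) hz4 2
  have hu := mirrorU_sub_cubic_isBigO
  have hU : (fun z : ℝ => z - 6 * z ^ 2 + 63 * z ^ 3) =O[𝓝 0] fun _ => (1 : ℝ) :=
    (Continuous.tendsto (by fun_prop) 0).isBigO_one ℝ
  have hu2 := isBigO_pow_sub_pow hu hU hz4 2
  have hu3 := isBigO_pow_sub_pow hu hU hz4 3
  have hres := isBigO_pow_mul_of_continuousAt (q := fun z => -28464 + 246366 * z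
    - 3587399 / 2 * z ^ 2 + 9130968 * z ^ 3 - 34863696 * z ^ 4 + 122022936 * z ^ 5)
    (by fun_prop) 4
  refine (((((w2tilde_sub_cubic_isBigO.sub hw1sq).add (hu.const_mul_left 18)).sub
    (hu2.const_mul_left (135 / 2))).add (hu3.const_mul_left 488)).add hres).congr_left
    (fun z => by ring) |>.mono nhdsWithin_le_nhds
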